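/- Let d ≥ 1, let ρ_t(x) = (2πt)^{-d/2} exp(−|x|²/(2t)) denote the standard heat kernel on ℝ^d, and let c > 0. There exist constants C > 0 and δ₀ ∈ (0, 1), depending only on d and c, such that for every δ ∈ (0, δ₀] and every x ∈ ℝ^d, ∫_{ℝ^d} (ρ_{1/2}(y) · ρ_{1/2}(x − y) / ρ_1(x)) · (|y|² + 1) · exp(c·δ·|y|²) dy ≤ C · exp(c·δ·|x|²) · (|x|² + 1). -/

import Mathlib

/-!
The bridge density `ρ_{1/2}(y) ρ_{1/2}(x - y) / ρ_1(x)` is the heat kernel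
`ρ_{1/4}(y - x/2)`. Since `|y|² ≤ 2|y - x/2|² + |x|²/2`, for `cδ ≤ 1/2` the weight
`(|y|² + 1) exp(cδ|y|²)` is at most `4 exp(cδ|x|²) (|x|² + 1) exp(3/2 |y - x/2|²)`, and
`ρ_{1/4}(z) exp(3/2 |z|²) = 4^{d/2} ρ_1(z)` has integral `4^{d/2}`.
-/

open MeasureTheory Real

/-- The standard heat kernel `ρ_t(z) = (2πt)^{-d/2} exp(-|z|²/(2t))` on `ℝ^d`. -/
noncomputable def heatKernel (d : ℕ) (t : ℝ) (z : EuclideanSpace ℝ (Fin d)) : ℝ :=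
  (2 * π * t) ^ (-(d : ℝ) / 2) * Real.exp (-‖z‖ ^ 2 / (2 * t))

variable {d : ℕ}

lemma heatKernel_pos {t : ℝ} (ht : 0 < t) (z : EuclideanSpace ℝ (Fin d)) :
    0 < heatKernel d t z := by
  unfold heatKernel; positivity

lemma integral_heatKernel {t : ℝ} (ht : 0 < t) :
    ∫ z, heatKernel d t z = 1 := by
  have hb : 0 < 1 / (2 * t) := by positivity
  have hexp (z : EuclideanSpace ℝ (Fin d)) :
      -‖z‖ ^ 2 / (2 * t) = -(1 / (2 * t)) * ‖z‖ ^ 2 := by ring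
  simp only [heatKernel, hexp, integral_const_mul,
    GaussianFourier.integral_rexp_neg_mul_sq_norm hb, finrank_euclideanSpace_fin]
  rw [div_div_eq_mul_div, div_one, show π * (2 * t) = 2 * π * t by ring,
    ← rpow_add (by positivity), neg_div, neg_add_cancel, rpow_zero]

lemma integrable_heatKernel {t : ℝ} (ht : 0 < t) :
    Integrable (heatKernel d t) :=
  .of_integral_ne_zero (by simp [integral_heatKernel ht])

lemma heatKernel_mul_heatKernel_div {s t : ℝ} (hs : 0 < s) (ht : 0 < t)
    (x y : EuclideanSpace ℝ (Fin d)) :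
    heatKernel d s y * heatKernel d t (x - y) / heatKernel d (s + t) x =
      heatKernel d (s * t / (s + t)) (y - (s / (s + t)) • x) := by
  have hconst : (2 * π * s) ^ (-(d : ℝ) / 2) * (2 * π * t) ^ (-(d : ℝ) / 2) /
      (2 * π * (s + t)) ^ (-(d : ℝ) / 2) = (2 * π * (s * t / (s + t))) ^ (-(d : ℝ) / 2) := by
    rw [← mul_rpow (by positivity) (by positivity), ← div_rpow (by positivity) (by positivity)]
    congr 1
    field_simp
  have hexp : -‖y‖ ^ 2 / (2 * s) + -‖x - y‖ ^ 2 / (2 * t) - -‖x‖ ^ 2 / (2 * (s + t)) =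
      -‖y - (s / (s + t)) • x‖ ^ 2 / (2 * (s * t / (s + t))) := by
    rw [norm_sub_sq_real x y, norm_sub_sq_real y, norm_smul, inner_smul_right, real_inner_comm,
      norm_of_nonneg (by positivity : 0 ≤ s / (s + t))]
    field_simp
    ring
  unfold heatKernel
  rw [← hconst, ← hexp, exp_sub, exp_add]
  ring

lemma heatKernel_mul_exp {s t : ℝ} (hs : 0 < s) (ht : 0 < t) (z : EuclideanSpace ℝ (Fin d)) :
    heatKernel d s z * Real.exp ((1 / (2 * s) - 1 / (2 * t)) * ‖z‖ ^ 2) =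
      (t / s) ^ ((d : ℝ) / 2) * heatKernel d t z := by
  have hconst : (2 * π * s) ^ (-(d : ℝ) / 2) =
      (t / s) ^ ((d : ℝ) / 2) * (2 * π * t) ^ (-(d : ℝ) / 2) := by
    rw [show 2 * π * s = (t / s)⁻¹ * (2 * π * t) by field_simp,
      mul_rpow (by positivity) (by positivity), neg_div, rpow_neg (by positivity),
      inv_rpow (by positivity), inv_inv, ← neg_div]
  unfold heatKernel
  rw [hconst, mul_assoc, ← exp_add, mul_assoc]
  congr 3
  ring

lemma heatKernel_half_mul_heatKernel_half_div (x y : EuclideanSpace ℝ (Fin d)) :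
    heatKernel d (1 / 2) y * heatKernel d (1 / 2) (x - y) / heatKernel d 1 x =
      heatKernel d (1 / 4) (y - (1 / 2 : ℝ) • x) := by
  have h := heatKernel_mul_heatKernel_div (d := d) (s := 1 / 2) (t := 1 / 2)
    (by norm_num) (by norm_num) x y
  rwa [show (1 / 2 + 1 / 2 : ℝ) = 1 by norm_num,
    show (1 / 2 * (1 / 2) / 1 : ℝ) = 1 / 4 by norm_num, div_one] at h

lemma sq_norm_le_two_mul_sq_norm_sub_add {E : Type*} [SeminormedAddCommGroup E] (y z : E) :
    ‖y‖ ^ 2 ≤ 2 * (‖y - z‖ ^ 2 + ‖z‖ ^ 2) := by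
  calc ‖y‖ ^ 2 ≤ (‖y - z‖ + ‖z‖) ^ 2 := by
        gcongr; linarith [norm_le_norm_add_norm_sub' y z]
    _ ≤ 2 * (‖y - z‖ ^ 2 + ‖z‖ ^ 2) := add_sq_le

lemma add_one_mul_exp_le {a u w r : ℝ} (ha0 : 0 ≤ a) (ha : a ≤ 1 / 2) (hu : 0 ≤ u)
    (hw : 0 ≤ w) (hr : r ≤ 2 * u + w / 2) :
    (r + 1) * exp (a * r) ≤ 4 * exp (a * w) * (w + 1) * exp (3 / 2 * u) := by
  have hpoly : r + 1 ≤ 4 * exp (u / 2) * (w + 1) := by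
    nlinarith [add_one_le_exp (u / 2), exp_pos (u / 2)]
  have hexp : exp (a * r) ≤ exp (u + a * w) := exp_le_exp.2 (by nlinarith)
  have hsplit : exp (u / 2) * exp (u + a * w) = exp (a * w) * exp (3 / 2 * u) := by
    rw [← exp_add, ← exp_add]; ring_nf
  calc (r + 1) * exp (a * r) ≤ 4 * exp (u / 2) * (w + 1) * exp (u + a * w) :=
        mul_le_mul hpoly hexp (exp_pos _).le (by positivity)
    _ = 4 * exp (a * w) * (w + 1) * exp (3 / 2 * u) := by
        linear_combination (4 * (w + 1)) * hsplit

lemma bridge_integrand_le {a : ℝ} (ha0 : 0 ≤ a) (ha : a ≤ 1 / 2)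
    (x y : EuclideanSpace ℝ (Fin d)) :
    heatKernel d (1 / 4) (y - (1 / 2 : ℝ) • x) * ((‖y‖ ^ 2 + 1) * exp (a * ‖y‖ ^ 2)) ≤
      4 * 4 ^ ((d : ℝ) / 2) * exp (a * ‖x‖ ^ 2) * (‖x‖ ^ 2 + 1) *
        heatKernel d 1 (y - (1 / 2 : ℝ) • x) := by
  set z := y - (1 / 2 : ℝ) • x
  have hy : ‖y‖ ^ 2 ≤ 2 * ‖z‖ ^ 2 + ‖x‖ ^ 2 / 2 := by
    have h := sq_norm_le_two_mul_sq_norm_sub_add y ((1 / 2 : ℝ) • x)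
    rw [norm_smul, norm_of_nonneg (by norm_num : (0 : ℝ) ≤ 1 / 2)] at h
    linear_combination h
  have hgain := heatKernel_mul_exp (d := d) (s := 1 / 4) (t := 1) (by norm_num) (by norm_num) z
  rw [show (1 / (2 * (1 / 4)) - 1 / (2 * 1) : ℝ) = 3 / 2 by norm_num,
    show (1 / (1 / 4) : ℝ) = 4 by norm_num] at hgain
  calc heatKernel d (1 / 4) z * ((‖y‖ ^ 2 + 1) * exp (a * ‖y‖ ^ 2))
      ≤ heatKernel d (1 / 4) z *
          (4 * exp (a * ‖x‖ ^ 2) * (‖x‖ ^ 2 + 1) * exp (3 / 2 * ‖z‖ ^ 2)) :=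
        mul_le_mul_of_nonneg_left (add_one_mul_exp_le ha0 ha (by positivity) (by positivity) hy)
          (heatKernel_pos (by norm_num) z).le
    _ = _ := by linear_combination (4 * exp (a * ‖x‖ ^ 2) * (‖x‖ ^ 2 + 1)) * hgain

theorem stmt_7_general (d : ℕ) (c : ℝ) (hc : 0 < c) :
    ∃ C δ₀ : ℝ, 0 < C ∧ 0 < δ₀ ∧ δ₀ < 1 ∧
      ∀ δ : ℝ, 0 < δ → δ ≤ δ₀ → ∀ x : EuclideanSpace ℝ (Fin d),
        (∫ y, heatKernel d (1 / 2) y * heatKernel d (1 / 2) (x - y) / heatKernel d 1 x *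
            ((‖y‖ ^ 2 + 1) * Real.exp (c * δ * ‖y‖ ^ 2)) ∂volume) ≤
          C * Real.exp (c * δ * ‖x‖ ^ 2) * (‖x‖ ^ 2 + 1) := by
  refine ⟨4 * 4 ^ ((d : ℝ) / 2), min (1 / 2) (1 / (2 * c)), by positivity, by positivity,
    (min_le_left _ _).trans_lt (by norm_num), fun δ hδ hδ₀ x ↦ ?_⟩
  have hcδ : c * δ ≤ 1 / 2 := by
    have := (le_div_iff₀ (by positivity)).1 (hδ₀.trans (min_le_right _ _))
    linarith
  simp_rw [heatKernel_half_mul_heatKernel_half_div]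
  calc _ ≤ ∫ y, 4 * 4 ^ ((d : ℝ) / 2) * exp (c * δ * ‖x‖ ^ 2) * (‖x‖ ^ 2 + 1) *
        heatKernel d 1 (y - (1 / 2 : ℝ) • x) :=
        integral_mono_of_nonneg
          (.of_forall fun y ↦ mul_nonneg (heatKernel_pos (by norm_num) _).le (by positivity))
          (((integrable_heatKernel one_pos).comp_sub_right _).const_mul _)
          (.of_forall fun y ↦ bridge_integrand_le (by positivity) hcδ x y)
    _ = _ := by
        rw [integral_const_mul, integral_sub_right_eq_self (heatKernel d 1),
          integral_heatKernel one_pos, mul_one]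

/-- Given `c > 0`, there are constants `C > 0` and `δ₀ ∈ (0,1)`, depending only on `d`
and `c`, such that for every `δ ∈ (0, δ₀]` and every `x ∈ ℝ^d`,
`∫ (ρ_{1/2}(y) ρ_{1/2}(x-y)/ρ_1(x)) (|y|² + 1) exp(cδ|y|²) dy
  ≤ C exp(cδ|x|²) (|x|² + 1)`. -/
theorem stmt_7 (d : ℕ) (hd : 1 ≤ d) (c : ℝ) (hc : 0 < c) :
    ∃ C δ₀ : ℝ, 0 < C ∧ 0 < δ₀ ∧ δ₀ < 1 ∧
      ∀ δ : ℝ, 0 < δ → δ ≤ δ₀ → ∀ x : EuclideanSpace ℝ (Fin d),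
        (∫ y, heatKernel d (1 / 2) y * heatKernel d (1 / 2) (x - y) / heatKernel d 1 x *
            ((‖y‖ ^ 2 + 1) * Real.exp (c * δ * ‖y‖ ^ 2)) ∂volume) ≤
          C * Real.exp (c * δ * ‖x‖ ^ 2) * (‖x‖ ^ 2 + 1) :=
  stmt_7_general d c hc
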